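/- arXiv:2004.08894 — 4 statements merged into one kernel-verified Lean document; each statement's English description precedes it below -/
import Mathlib

section
/- For n = 3, the function Φ(ρ) = ∫_{-1}^{1} |t - ρ/3| / (1 - 2tρ + ρ²)^{1/2} dt satisfies the closed form Φ(ρ) = (2/3) · ((1 + ρ²/3)^{3/2} - 1 + ρ²)/ρ² for all ρ ∈ (0,1]. -/
/-!
With `u t = 1 - 2ρt + ρ²`, the function `-(1 + ρt) √(u t) / (3ρ²)` is an antiderivative of
`(t - ρ/3) / √(u t)` on `[-1, 1)`. This derivative changes sign exactly once, at `t = ρ/3`, so the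
integral of its absolute value is read off from the antiderivative at `-1`, `ρ/3` and `1`; at the
endpoints `u` is a perfect square, and at `ρ/3` it equals `1 + ρ²/3`.
-/

open Real MeasureTheory Set

namespace intervalIntegral

variable {F f : ℝ → ℝ} {a b c : ℝ}

theorem integral_eq_sub_of_hasDerivAt_of_nonneg (hab : a ≤ b) (hcont : ContinuousOn F (Icc a b))
    (hderiv : ∀ x ∈ Ioo a b, HasDerivAt F (f x) x) (hpos : ∀ x ∈ Ioo a b, 0 ≤ f x) :
    IntervalIntegrable f volume a b ∧ ∫ x in a..b, f x = F b - F a := by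
  have hint : IntervalIntegrable f volume a b :=
    (intervalIntegrable_iff_integrableOn_Ioc_of_le hab).2
      (integrableOn_deriv_of_nonneg hcont hderiv hpos)
  exact ⟨hint, integral_eq_sub_of_hasDerivAt_of_le hab hcont hderiv hint⟩

theorem integral_abs_eq_of_hasDerivAt_of_sign_change (hac : a ≤ c) (hcb : c ≤ b)
    (hcont : ContinuousOn F (Icc a b)) (hderiv : ∀ x ∈ Ioo a b, HasDerivAt F (f x) x)
    (hneg : ∀ x ∈ Ioo a c, f x ≤ 0) (hpos : ∀ x ∈ Ioo c b, 0 ≤ f x) :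
    ∫ x in a..b, |f x| = F a + F b - 2 * F c := by
  obtain ⟨hint₁, hI₁⟩ := integral_eq_sub_of_hasDerivAt_of_nonneg (F := fun x => -F x) hac
    (hcont.mono (Icc_subset_Icc_right hcb)).neg
    (fun x hx => by
      rw [abs_of_nonpos (hneg x hx)]
      exact (hderiv x ⟨hx.1, hx.2.trans_le hcb⟩).neg)
    (fun x _ => abs_nonneg (f x))
  obtain ⟨hint₂, hI₂⟩ := integral_eq_sub_of_hasDerivAt_of_nonneg (F := F) hcb
    (hcont.mono (Icc_subset_Icc_left hac))
    (fun x hx => by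
      rw [abs_of_nonneg (hpos x hx)]
      exact hderiv x ⟨hac.trans_lt hx.1, hx.2⟩)
    (fun x _ => abs_nonneg (f x))
  rw [← integral_add_adjacent_intervals hint₁ hint₂, hI₁, hI₂]
  ring

end intervalIntegral

theorem hasDerivAt_neg_one_add_mul_sqrt_div {ρ t : ℝ} (hρ : ρ ≠ 0) (hu : 0 < 1 - 2*t*ρ + ρ^2) :
    HasDerivAt (fun t => -(1 + ρ*t) * √(1 - 2*t*ρ + ρ^2) / (3*ρ^2))
      ((t - ρ/3) / √(1 - 2*t*ρ + ρ^2)) t := by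
  have hu' : HasDerivAt (fun t => 1 - 2*t*ρ + ρ^2) (-(2*ρ)) t :=
    ((((hasDerivAt_id t).const_mul 2).mul_const ρ).const_sub 1).add_const (ρ^2)
      |>.congr_deriv (by ring)
  have hlin : HasDerivAt (fun t => -(1 + ρ*t)) (-ρ) t :=
    (((hasDerivAt_id t).const_mul ρ).const_add 1).neg.congr_deriv (by ring)
  refine ((hlin.mul (hu'.sqrt hu.ne')).div_const (3*ρ^2)).congr_deriv ?_
  have hs : √(1 - 2*t*ρ + ρ^2) ^ 2 = 1 - 2*t*ρ + ρ^2 := sq_sqrt hu.le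
  have hs0 : √(1 - 2*t*ρ + ρ^2) ≠ 0 := (sqrt_pos.2 hu).ne'
  generalize √(1 - 2*t*ρ + ρ^2) = s at hs hs0 ⊢
  field_simp
  linear_combination -hs

theorem Phi_closed_form_dim3 (ρ : Real) (hρ : ρ ∈ Set.Ioc (0:Real) 1) :
    (∫ t in (-1:Real)..1, |t - ρ/3| / (1 - 2*t*ρ + ρ^2) ^ ((1:Real)/2))
      = 2/3 * ((1 + ρ^2/3) ^ ((3:Real)/2) - 1 + ρ^2) / ρ^2 := by
  obtain ⟨hρ0, hρ1⟩ := hρ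
  have hintegrand : ∀ t : ℝ, |t - ρ/3| / (1 - 2*t*ρ + ρ^2) ^ ((1:ℝ)/2)
      = |(t - ρ/3) / √(1 - 2*t*ρ + ρ^2)| := fun t => by
    rw [abs_div, abs_of_nonneg (sqrt_nonneg _), sqrt_eq_rpow]
  simp_rw [hintegrand]
  rw [intervalIntegral.integral_abs_eq_of_hasDerivAt_of_sign_change (c := ρ/3)
    (by linarith) (by linarith) (by fun_prop)
    (fun t ht => hasDerivAt_neg_one_add_mul_sqrt_div hρ0.ne'
      (by nlinarith [sq_nonneg (1 - ρ), ht.2]))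
    (fun t ht => div_nonpos_of_nonpos_of_nonneg (by linarith [ht.2]) (sqrt_nonneg _))
    (fun t ht => div_nonneg (by linarith [ht.1]) (sqrt_nonneg _))]
  have hum : √(1 - 2*(-1)*ρ + ρ^2) = 1 + ρ := by
    rw [show 1 - 2*(-1)*ρ + ρ^2 = (1 + ρ)^2 by ring, sqrt_sq (by linarith)]
  have hup : √(1 - 2*1*ρ + ρ^2) = 1 - ρ := by
    rw [show 1 - 2*1*ρ + ρ^2 = (1 - ρ)^2 by ring, sqrt_sq (by linarith)]
  have hpow : (1 + ρ^2/3) ^ ((3:ℝ)/2) = (1 + ρ^2/3) * √(1 + ρ^2/3) := by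
    rw [show (3:ℝ)/2 = 1 + 1/2 by norm_num, rpow_add (by positivity), rpow_one, sqrt_eq_rpow]
  simp only [hum, hup, hpow, show 1 - 2*(ρ/3)*ρ + ρ^2 = 1 + ρ^2/3 by ring]
  field_simp
  ring
end

section
/- The function ρ ↦ (2/3) · ((1 + ρ²/3)^{3/2} - 1 + ρ²)/ρ² (extended by its limit 1 at ρ = 0) is strictly increasing on [0, 1]. -/
/-!
Substitute `s = √(1 + ρ²/3)`, so that `ρ² = 3 (s² - 1)` and `(1 + ρ²/3)^{3/2} = s³`.
Dividing out the common factor `s - 1` turns the function into `2/3 + 2/9 (s + 1/(s + 1))`,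
which also takes the value `1` at `ρ = 0`. Both `ρ ↦ s` and `s ↦ s + 1/(s + 1)` are strictly
increasing for `ρ, s ≥ 0`.
-/

open Real Set

lemma strictMonoOn_add_inv_add_one : StrictMonoOn (fun s : ℝ => s + (s + 1)⁻¹) (Ici 0) := by
  intro a ha b hb hab
  have ha1 : 0 < a + 1 := by linarith [mem_Ici.1 ha]
  have hb1 : 0 < b + 1 := by linarith [mem_Ici.1 hb]
  have hprod : 1 < (a + 1) * (b + 1) := by nlinarith [mem_Ici.1 ha]
  calc a + (a + 1)⁻¹ = b + (b + 1)⁻¹ - (b - a) * (1 - ((a + 1) * (b + 1))⁻¹) := by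
        field_simp
        ring
    _ < b + (b + 1)⁻¹ := by
        have := inv_lt_one_of_one_lt₀ hprod
        nlinarith

lemma strictMonoOn_sqrt_one_add_sq_div_three :
    StrictMonoOn (fun ρ : ℝ => √(1 + ρ ^ 2 / 3)) (Ici 0) := by
  intro a ha b _ hab
  have : a ^ 2 < b ^ 2 := pow_lt_pow_left₀ hab (mem_Ici.1 ha) two_ne_zero
  exact sqrt_lt_sqrt (by positivity) (by linarith)

lemma Phi_dim3_eq (ρ : ℝ) :
    (if ρ = 0 then 1 else 2/3 * ((1 + ρ^2/3) ^ ((3:Real)/2) - 1 + ρ^2) / ρ^2)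
      = 2/3 + 2/9 * (√(1 + ρ ^ 2 / 3) + (√(1 + ρ ^ 2 / 3) + 1)⁻¹) := by
  split_ifs with hρ
  · subst hρ
    norm_num
  set s := √(1 + ρ ^ 2 / 3) with hs
  have hx : (0:ℝ) ≤ 1 + ρ ^ 2 / 3 := by positivity
  have hs_sq : s ^ 2 = 1 + ρ ^ 2 / 3 := sq_sqrt hx
  have hpow : (1 + ρ ^ 2 / 3) ^ ((3:ℝ) / 2) = s ^ 3 := by
    rw [rpow_div_two_eq_sqrt _ hx, ← hs]
    norm_cast
  have hρ_sq : ρ ^ 2 = 3 * (s ^ 2 - 1) := by linarith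
  have hs_sq_ne_one : s ^ 2 - 1 ≠ 0 := fun h =>
    hρ (pow_eq_zero_iff two_ne_zero |>.1 (by rw [hρ_sq, h, mul_zero]))
  rw [hpow, hρ_sq]
  have : s + 1 ≠ 0 := by positivity
  field_simp
  ring

theorem Phi_dim3_strictMono :
    StrictMonoOn (fun ρ : Real =>
      if ρ = 0 then 1 else 2/3 * ((1 + ρ^2/3) ^ ((3:Real)/2) - 1 + ρ^2) / ρ^2)
      (Set.Icc (0:Real) 1) := by
  simp only [Phi_dim3_eq]
  have hmaps : MapsTo (fun ρ : ℝ => √(1 + ρ ^ 2 / 3)) (Ici 0) (Ici 0) :=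
    fun ρ _ => sqrt_nonneg _
  have hmono := strictMonoOn_add_inv_add_one.comp strictMonoOn_sqrt_one_add_sq_div_three hmaps
  have haffine : StrictMono fun x : ℝ => 2/3 + 2/9 * x := fun x y hxy => by simp only; linarith
  exact (haffine.comp_strictMonoOn hmono).mono Icc_subset_Ici_self
end

section
/- Let λ > -1/2, -1 < s < 1, and k ≥ 2 an integer. Then ∫_{-1}^{1} |x - s| (1 - x²)^{λ - 1/2} C_k^λ(x) dx = (8λ(λ+1) / (k(k-1)(k+2λ)(k+2λ+1))) · (1 - s²)^{λ + 3/2} · C_{k-2}^{λ+2}(s), where C_k^λ denotes the Gegenbauer polynomial of degree k with parameter λ. -/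
/-- Gegenbauer (ultraspherical) polynomials `C_k^l(x)`, via the standard recurrence
(equivalent to the generating relation `(1-2xz+z^2)^(-l) = ∑ C_k^l(x) z^k`). -/
noncomputable def gegenbauer : Nat -> Real -> Real -> Real
  | 0, _, _ => 1
  | 1, l, x => 2 * l * x
  | (k+2), l, x =>
      (2 * (l + (k:Real) + 1) * x * gegenbauer (k+1) l x
        - ((k:Real) + 2*l) * gegenbauer k l x) / ((k:Real) + 2)

/-!
With `w_λ(x) = (1 - x²)^(λ - 1/2)`, the Rodrigues-type identity
`(w_{λ+1} C_n^{λ+1})' = -((n + 1)(n + 2λ + 1) / (2λ)) w_λ C_{n+1}^λ`, applied twice, writes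
`w_l C_k^l` as `K''` with `K` a multiple of `w_{l+2} C_{k-2}^{l+2}`. Both `K` and `K'` vanish at
`±1`, so integrating by parts on either side of `s` gives `∫_{-1}^1 |x - s| K''(x) dx = 2 K(s)`.
For `l = 0` both sides vanish, as `C_k^0 = 0` for `k ≥ 1` in this normalisation.
-/

open Set MeasureTheory intervalIntegral

theorem gegenbauer_recurrence (n : ℕ) (l x : ℝ) :
    ((n : ℝ) + 2) * gegenbauer (n + 2) l x =
      2 * (l + n + 1) * x * gegenbauer (n + 1) l x - (n + 2 * l) * gegenbauer n l x := by
  rw [gegenbauer]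
  field_simp

theorem mul_gegenbauer_add_two_of_param_succ (l x : ℝ) : ∀ n : ℕ,
    ((n : ℝ) + 2) * gegenbauer (n + 2) l x =
      2 * l * (x * gegenbauer (n + 1) (l + 1) x - gegenbauer n (l + 1) x)
  | 0 => by norm_num [gegenbauer]; ring
  | 1 => by norm_num [gegenbauer]; ring
  | n + 2 => by
    have h₁ := mul_gegenbauer_add_two_of_param_succ l x (n + 1)
    have h₀ := mul_gegenbauer_add_two_of_param_succ l x n
    have r := gegenbauer_recurrence (n + 2) l x
    have r₁ := gegenbauer_recurrence (n + 1) (l + 1) x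
    have r₀ := gegenbauer_recurrence n (l + 1) x
    push_cast at *
    apply mul_left_cancel₀ (show ((n : ℝ) + 2) * (n + 3) ≠ 0 by positivity)
    linear_combination ((n : ℝ) + 2) * (n + 3) * r + 2 * (l + n + 3) * x * (n + 2) * h₁
      - (n + 2 * l + 2) * (n + 3) * h₀ - 2 * l * x * (n + 2) * r₁ + 2 * l * (n + 3) * r₀

theorem gegenbauer_add_two_of_param_succ (l x : ℝ) : ∀ n : ℕ,
    gegenbauer (n + 2) l x =
      gegenbauer (n + 2) (l + 1) x - 2 * x * gegenbauer (n + 1) (l + 1) x + gegenbauer n (l + 1) x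
  | 0 => by norm_num [gegenbauer]; ring
  | 1 => by norm_num [gegenbauer]; ring
  | n + 2 => by
    have h₁ := gegenbauer_add_two_of_param_succ l x (n + 1)
    have h₀ := gegenbauer_add_two_of_param_succ l x n
    have r := gegenbauer_recurrence (n + 2) l x
    have r₂ := gegenbauer_recurrence (n + 2) (l + 1) x
    have r₁ := gegenbauer_recurrence (n + 1) (l + 1) x
    have r₀ := gegenbauer_recurrence n (l + 1) x
    push_cast at *
    apply mul_left_cancel₀ (show (n : ℝ) + 4 ≠ 0 by positivity)
    linear_combination
      r + 2 * (l + n + 3) * x * h₁ - (n + 2 * l + 2) * h₀ - r₂ + 2 * x * r₁ - r₀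

theorem mul_gegenbauer_succ_of_param_succ (n : ℕ) (l x : ℝ) :
    ((n : ℝ) + 1 + 2 * l) * gegenbauer (n + 1) l x =
      2 * l * (gegenbauer (n + 1) (l + 1) x - x * gegenbauer n (l + 1) x) := by
  cases n with
  | zero => norm_num [gegenbauer]; ring
  | succ n =>
    have hB := mul_gegenbauer_add_two_of_param_succ l x n
    have hD := gegenbauer_add_two_of_param_succ l x n
    push_cast at *
    linear_combination hB + 2 * l * hD

theorem gegenbauer_succ_param_zero (x : ℝ) : ∀ n : ℕ, gegenbauer (n + 1) 0 x = 0
  | 0 => by simp [gegenbauer]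
  | n + 1 => by
    have h := mul_gegenbauer_add_two_of_param_succ 0 x n
    simp only [mul_zero, zero_mul, mul_eq_zero] at h
    exact h.resolve_left (by positivity)

theorem hasDerivAt_gegenbauer_succ (l x : ℝ) : ∀ n : ℕ,
    HasDerivAt (gegenbauer (n + 1) l) (2 * l * gegenbauer n (l + 1) x) x
  | 0 => by simpa [gegenbauer] using (hasDerivAt_id x).const_mul (2 * l)
  | 1 => by
    have e : gegenbauer 2 l = fun y => 2 * l * (l + 1) * y ^ 2 - l := by
      ext y; norm_num [gegenbauer]; ring
    rw [e]
    refine (((hasDerivAt_pow 2 x).const_mul (2 * l * (l + 1))).sub_const l).congr_deriv ?_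
    norm_num [gegenbauer]; ring
  | n + 2 => by
    have h₁ : HasDerivAt (gegenbauer (n + 2) l) (2 * l * gegenbauer (n + 1) (l + 1) x) x :=
      hasDerivAt_gegenbauer_succ l x (n + 1)
    have h₀ := hasDerivAt_gegenbauer_succ l x n
    have hB := mul_gegenbauer_add_two_of_param_succ l x n
    have hC : ((n : ℝ) + 2 + 2 * l) * gegenbauer (n + 2) l x =
        2 * l * (gegenbauer (n + 2) (l + 1) x - x * gegenbauer (n + 1) (l + 1) x) := by
      simpa [add_assoc, one_add_one_eq_two] using mul_gegenbauer_succ_of_param_succ (n + 1) l x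
    have r := gegenbauer_recurrence n (l + 1) x
    have e : gegenbauer (n + 3) l = fun y =>
        (2 * (l + (n + 1 : ℕ) + 1) * y * gegenbauer (n + 2) l y
          - ((n + 1 : ℕ) + 2 * l) * gegenbauer (n + 1) l y) / ((n + 1 : ℕ) + 2) := rfl
    rw [e]
    refine ((((hasDerivAt_id' x).const_mul _).mul h₁).sub (h₀.const_mul _)).div_const _
      |>.congr_deriv ?_
    push_cast at *
    field_simp
    linear_combination (hB + hC - 2 * l * r) / 2

theorem differentiable_gegenbauer (l : ℝ) : ∀ n : ℕ, Differentiable ℝ (gegenbauer n l)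
  | 0 => by simp [gegenbauer]
  | n + 1 => fun x => (hasDerivAt_gegenbauer_succ l x n).differentiableAt

theorem deriv_gegenbauer_succ (n : ℕ) (l x : ℝ) :
    deriv (gegenbauer (n + 1) l) x = 2 * l * gegenbauer n (l + 1) x :=
  (hasDerivAt_gegenbauer_succ l x n).deriv

theorem mul_gegenbauer_succ_of_deriv (n : ℕ) (l x : ℝ) :
    ((n : ℝ) + 1) * (n + 2 * l + 1) * gegenbauer (n + 1) l x =
      2 * l * ((2 * l + 1) * x * gegenbauer n (l + 1) x
        - (1 - x ^ 2) * deriv (gegenbauer n (l + 1)) x) := by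
  match n with
  | 0 => norm_num [gegenbauer]; ring
  | 1 => norm_num [deriv_gegenbauer_succ, gegenbauer]; ring
  | m + 2 =>
    have hB₁ : ((m : ℝ) + 3) * gegenbauer (m + 2 + 1) l x =
        2 * l * (x * gegenbauer (m + 2) (l + 1) x - gegenbauer (m + 1) (l + 1) x) := by
      convert mul_gegenbauer_add_two_of_param_succ l x (m + 1) using 2; push_cast; ring
    have hB₀ := mul_gegenbauer_add_two_of_param_succ (l + 1) x m
    have hC := mul_gegenbauer_succ_of_param_succ m (l + 1) x
    rw [deriv_gegenbauer_succ]
    push_cast at *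
    linear_combination ((m : ℝ) + 2 * l + 3) * hB₁ + 2 * l * x * hB₀ - 2 * l * hC

theorem intervalIntegrable_one_sub_sq_rpow_mul {r : ℝ} (hr : -1 < r) {φ : ℝ → ℝ}
    (hφ : ContinuousOn φ (Icc (-1) 1)) :
    IntervalIntegrable (fun x => (1 - x ^ 2) ^ r * φ x) volume (-1) 1 := by
  have factor : ∀ x ∈ Icc (-1 : ℝ) 1,
      (1 - x ^ 2) ^ r * φ x = (1 + x) ^ r * ((1 - x) ^ r * φ x) := fun x hx => by
    rw [← mul_assoc, ← Real.mul_rpow (by linarith [hx.1]) (by linarith [hx.2])]; ring_nf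
  have left : IntervalIntegrable (fun x => (1 - x ^ 2) ^ r * φ x) volume (-1) 0 := by
    have h := ((intervalIntegrable_rpow' (a := 0) (b := 1) hr).comp_add_right 1)
      |>.mul_continuousOn (g := fun x => (1 - x) ^ r * φ x) ?_
    · rw [zero_sub, sub_self] at h
      refine h.congr_uIoo fun x hx => ?_
      rw [uIoo_of_le (by norm_num)] at hx
      simp only [add_comm x 1]
      rw [factor x ⟨hx.1.le, by linarith [hx.2]⟩]
    · rw [zero_sub, sub_self, uIcc_of_le (by norm_num)]
      exact ((continuousOn_const.sub continuousOn_id).rpow_const fun x hx =>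
        Or.inl (show 1 - x ≠ 0 by linarith [hx.2])).mul
          (hφ.mono (Icc_subset_Icc_right (by norm_num)))
  have right : IntervalIntegrable (fun x => (1 - x ^ 2) ^ r * φ x) volume 0 1 := by
    have h := ((intervalIntegrable_rpow' (a := 0) (b := 1) hr).comp_sub_left 1).symm
      |>.mul_continuousOn (g := fun x => (1 + x) ^ r * φ x) ?_
    · rw [sub_zero, sub_self] at h
      refine h.congr_uIoo fun x hx => ?_
      rw [uIoo_of_le (by norm_num)] at hx
      rw [factor x ⟨by linarith [hx.1], hx.2.le⟩]
      ring
    · rw [sub_zero, sub_self, uIcc_of_le (by norm_num)]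
      exact ((continuousOn_const.add continuousOn_id).rpow_const fun x hx =>
        Or.inl (show 1 + x ≠ 0 by linarith [hx.1])).mul
          (hφ.mono (Icc_subset_Icc_left (by norm_num)))
  exact left.trans right

theorem integral_abs_sub_mul_eq_two_mul {a b s : ℝ} {g H K : ℝ → ℝ} (hs : s ∈ Icc a b)
    (hg : IntervalIntegrable g volume a b) (hH : ContinuousOn H (Icc a b))
    (hK : ContinuousOn K (Icc a b)) (hHg : ∀ x ∈ Ioo a b, HasDerivAt H (g x) x)
    (hKH : ∀ x ∈ Ioo a b, HasDerivAt K (H x) x) (hHa : H a = 0) (hHb : H b = 0)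
    (hKa : K a = 0) (hKb : K b = 0) :
    ∫ x in a..b, |x - s| * g x = 2 * K s := by
  -- `(x - s) H - K` is an antiderivative of `(x - s) g`
  have ftc : ∀ c d, a ≤ c → c ≤ d → d ≤ b →
      ∫ x in c..d, (x - s) * g x = ((d - s) * H d - K d) - ((c - s) * H c - K c) := by
    intro c d hac hcd hdb
    have hsub : Icc c d ⊆ Icc a b := Icc_subset_Icc hac hdb
    refine integral_eq_sub_of_hasDerivAt_of_le hcd
      ((((continuousOn_id.sub continuousOn_const).mul hH).sub hK).mono hsub) (fun x hx => ?_) ?_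
    · have hx' : x ∈ Ioo a b := Ioo_subset_Ioo hac hdb hx
      exact ((((hasDerivAt_id' x).sub_const s).mul (hHg x hx')).sub (hKH x hx')).congr_deriv
        (by ring)
    · refine (hg.mono_set ?_).continuousOn_mul (continuousOn_id.sub continuousOn_const)
      rw [uIcc_of_le hcd, uIcc_of_le (hac.trans (hcd.trans hdb))]
      exact hsub
  have hint : IntervalIntegrable (fun x => |x - s| * g x) volume a b :=
    hg.continuousOn_mul (continuous_abs.comp_continuousOn (continuousOn_id.sub continuousOn_const))
  have below : ∫ x in a..s, |x - s| * g x = K s := by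
    rw [integral_congr (g := fun x => -((x - s) * g x)) fun x hx => ?_,
      intervalIntegral.integral_neg, ftc a s le_rfl hs.1 hs.2, hHa, hKa]
    · ring
    · rw [uIcc_of_le hs.1] at hx
      simp only [abs_of_nonpos (sub_nonpos.2 hx.2), neg_mul]
  have above : ∫ x in s..b, |x - s| * g x = K s := by
    rw [integral_congr (g := fun x => (x - s) * g x) fun x hx => ?_,
      ftc s b hs.1 hs.2 le_rfl, hHb, hKb]
    · ring
    · rw [uIcc_of_le hs.2] at hx
      simp only [abs_of_nonneg (sub_nonneg.2 hx.1)]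
  rw [← integral_add_adjacent_intervals (hint.mono_set ?_) (hint.mono_set ?_), below, above]
  · ring
  all_goals rw [uIcc_of_le (hs.1.trans hs.2)]
  · rw [uIcc_of_le hs.1]; exact Icc_subset_Icc_right hs.2
  · rw [uIcc_of_le hs.2]; exact Icc_subset_Icc_left hs.1

noncomputable def weightedGegenbauer (n : ℕ) (l x : ℝ) : ℝ :=
  (1 - x ^ 2) ^ (l - 1 / 2) * gegenbauer n l x

theorem hasDerivAt_weightedGegenbauer_param_succ (n : ℕ) {l x : ℝ} (hl : l ≠ 0)
    (hx : x ∈ Ioo (-1) 1) :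
    HasDerivAt (weightedGegenbauer n (l + 1))
      (-(((n : ℝ) + 1) * (n + 2 * l + 1) / (2 * l)) * weightedGegenbauer (n + 1) l x) x := by
  have hx2 : 0 < 1 - x ^ 2 := by nlinarith [hx.1, hx.2]
  have hw := ((hasDerivAt_pow 2 x).const_sub 1).rpow_const (p := l + 1 - 1 / 2) (Or.inl hx2.ne')
  refine (hw.mul (differentiable_gegenbauer (l + 1) n x).hasDerivAt).congr_deriv ?_
  have e₁ : l + 1 - 1 / 2 - 1 = l - 1 / 2 := by ring
  have e₂ : (1 - x ^ 2) ^ (l + 1 - 1 / 2) = (1 - x ^ 2) ^ (l - 1 / 2) * (1 - x ^ 2) := by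
    rw [show l + 1 - 1 / 2 = l - 1 / 2 + 1 by ring, Real.rpow_add hx2, Real.rpow_one]
  have key := mul_gegenbauer_succ_of_deriv n l x
  rw [weightedGegenbauer, e₁, e₂]
  field_simp
  linear_combination key

theorem intervalIntegrable_weightedGegenbauer (n : ℕ) {l : ℝ} (hl : -1 / 2 < l) :
    IntervalIntegrable (weightedGegenbauer n l) volume (-1) 1 :=
  intervalIntegrable_one_sub_sq_rpow_mul (by linarith)
    (differentiable_gegenbauer l n).continuous.continuousOn

theorem continuous_weightedGegenbauer (n : ℕ) {l : ℝ} (hl : 1 / 2 ≤ l) :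
    Continuous (weightedGegenbauer n l) :=
  ((continuous_const.sub (continuous_pow 2)).rpow_const fun _ => Or.inr (by linarith)).mul
    (differentiable_gegenbauer l n).continuous

theorem weightedGegenbauer_of_sq_eq_one (n : ℕ) {l : ℝ} (hl : 1 / 2 < l) {x : ℝ}
    (hx : x ^ 2 = 1) :
    weightedGegenbauer n l x = 0 := by
  rw [weightedGegenbauer, hx, sub_self, Real.zero_rpow (by linarith), zero_mul]

theorem integral_abs_sub_mul_weightedGegenbauer (m : ℕ) {l s : ℝ} (hl : -1 / 2 < l)
    (hl0 : l ≠ 0) (hs : s ∈ Icc (-1) 1) :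
    ∫ x in (-1)..1, |x - s| * weightedGegenbauer (m + 2) l x =
      8 * l * (l + 1) / ((m + 1) * (m + 2) * (m + 2 * l + 2) * (m + 2 * l + 3)) *
        weightedGegenbauer m (l + 2) s := by
  have hl₁ : l + 1 ≠ 0 := by linarith
  have hm₂ : (m : ℝ) + 2 * l + 2 ≠ 0 := by linarith [(m.cast_nonneg : (0 : ℝ) ≤ m)]
  have hm₃ : (m : ℝ) + 2 * l + 3 ≠ 0 := by linarith [(m.cast_nonneg : (0 : ℝ) ≤ m)]
  have hlt₁ : 1 / 2 < l + 1 := by linarith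
  have hlt₂ : 1 / 2 < l + 2 := by linarith
  rw [integral_abs_sub_mul_eq_two_mul hs (intervalIntegrable_weightedGegenbauer (m + 2) hl)
    (H := fun x => -(2 * l / ((m + 2) * (m + 2 * l + 2))) * weightedGegenbauer (m + 1) (l + 1) x)
    (K := fun x => 2 * l / ((m + 2) * (m + 2 * l + 2)) *
      (2 * (l + 1) / ((m + 1) * (m + 2 * l + 3))) * weightedGegenbauer m (l + 2) x)]
  · field_simp
    ring
  · exact (continuous_const.mul (continuous_weightedGegenbauer _ hlt₁.le)).continuousOn
  · exact (continuous_const.mul (continuous_weightedGegenbauer _ hlt₂.le)).continuousOn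
  · intro x hx
    refine ((hasDerivAt_weightedGegenbauer_param_succ (m + 1) hl0 hx).const_mul _).congr_deriv ?_
    push_cast
    field_simp
    ring
  · intro x hx
    have h := (hasDerivAt_weightedGegenbauer_param_succ m hl₁ hx).const_mul
      (2 * l / ((m + 2) * (m + 2 * l + 2)) * (2 * (l + 1) / ((m + 1) * (m + 2 * l + 3))))
    rw [show l + 1 + 1 = l + 2 by ring] at h
    refine h.congr_deriv ?_
    field_simp
    ring
  all_goals
    simp [weightedGegenbauer_of_sq_eq_one _ hlt₁, weightedGegenbauer_of_sq_eq_one _ hlt₂]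

theorem gegenbauer_abs_integral (l s : Real) (hl : -1/2 < l) (hs : s ∈ Set.Ioo (-1:Real) 1)
    (k : Nat) (hk : 2 ≤ k) :
    (∫ x in (-1:Real)..1, |x - s| * (1 - x^2) ^ (l - 1/2) * gegenbauer k l x)
      = 8*l*(l+1) / ((k:Real) * ((k:Real)-1) * ((k:Real)+2*l) * ((k:Real)+2*l+1))
          * (1 - s^2) ^ (l + 3/2) * gegenbauer (k-2) (l+2) s := by
  obtain ⟨m, rfl⟩ : ∃ m, k = m + 2 := ⟨k - 2, by omega⟩
  rcases eq_or_ne l 0 with rfl | hl0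
  · simp [gegenbauer_succ_param_zero _ (m + 1)]
  have h := integral_abs_sub_mul_weightedGegenbauer m hl hl0 (Ioo_subset_Icc_self hs)
  simp only [weightedGegenbauer, ← mul_assoc] at h
  rw [h, show l + 2 - 1 / 2 = l + 3 / 2 by ring, Nat.add_sub_cancel]
  push_cast
  ring
end

section
/- For n = 3 and t ∈ (0, 1], the inequality reverses: ₂F₁(1, 3/2; 2; t(1 - t/9)/(1 + t/3)) < (1 + t/3)·1 / ((1 - t/3)(1 - t/9)·1), i.e., with n = 3 the right-hand side of the hypergeometric inequality from the n ≥ 4 case strictly exceeds the left-hand side. -/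
/-!
By the binomial series `(1 - z)^(1 - b) = ∑ (b - 1)_n zⁿ / n!`, the hypergeometric function
`₂F₁(1, b; 2; z)` equals `((1 - z)^(1 - b) - 1) / ((b - 1) z)`; for `b = 3/2` it is
`2 ((1 - z)^(-1/2) - 1) / z`. The argument `z = t(9 - t)/(3(3 + t))` satisfies
`1 - z = (3 - t)² / (3(3 + t))`, so after multiplying by `z` the inequality becomes
`2 √(9 + 3t) < 6 + t`, which is AM-GM for `3 ≠ 3 + t` (equivalently `0 < t²`).
-/

/-- Pochhammer symbol (rising factorial). -/
noncomputable def poch (a : Real) (k : Nat) : Real := (ascPochhammer Real k).eval a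

/-- Gauss hypergeometric function 2F1. -/
noncomputable def hyperg (a b c z : Real) : Real :=
  ∑' k : Nat, poch a k * poch b k / (poch c k * (Nat.factorial k)) * z ^ k

open Nat

lemma poch_one (k : ℕ) : poch 1 k = k ! := ascPochhammer_eval_one ℝ k

lemma poch_succ_left (a : ℝ) (k : ℕ) : poch a (k + 1) = a * poch (a + 1) k := by
  simp [poch, ascPochhammer_succ_left]

lemma poch_two (k : ℕ) : poch 2 k = (k + 1)! := by
  have h := poch_succ_left 1 k
  rw [poch_one, one_add_one_eq_two, one_mul] at h
  exact h.symm

lemma Ring.choose_add_natCast_sub_one_eq_poch_div (a : ℝ) (n : ℕ) :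
    Ring.choose (a + n - 1) n = poch a n / n ! := by
  rw [← Ring.multichoose_eq, eq_div_iff (by positivity), mul_comm, ← nsmul_eq_mul,
    Ring.factorial_nsmul_multichoose_eq_ascPochhammer, Polynomial.ascPochhammer_smeval_eq_eval]
  rfl

lemma sub_one_mul_hyperg_coeff_one_two (b : ℝ) (k : ℕ) :
    (b - 1) * (poch 1 k * poch b k / (poch 2 k * k !)) =
      Ring.choose (b - 1 + (k + 1 : ℕ) - 1) (k + 1) := by
  rw [Ring.choose_add_natCast_sub_one_eq_poch_div, poch_succ_left, sub_add_cancel, poch_one,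
    poch_two]
  field_simp

theorem sub_one_mul_mul_hyperg_one_two (b z : ℝ) (hz : |z| < 1) :
    (b - 1) * z * hyperg 1 b 2 z = 1 / (1 - z) ^ (b - 1) - 1 := by
  have hbinom : HasSum (fun n : ℕ ↦ Ring.choose (b - 1 + n - 1) n * z ^ n)
      (1 / (1 - z) ^ (b - 1)) := by
    simpa [mul_comm] using (Real.one_div_one_sub_rpow_hasFPowerSeriesOnBall_zero (b - 1)).hasSum
      (y := z) (by simpa [enorm_eq_nnnorm, ← NNReal.coe_lt_one] using hz)
  have htail := (hasSum_nat_add_iff' 1).2 hbinom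
  simp only [Finset.range_one, Finset.sum_singleton, Nat.cast_zero, add_zero,
    Ring.choose_zero_right, pow_zero, mul_one] at htail
  rw [hyperg, ← tsum_mul_left, ← htail.tsum_eq]
  congr 1 with k
  rw [← sub_one_mul_hyperg_coeff_one_two, pow_succ]
  ring

theorem mul_hyperg_one_three_halves_two (z : ℝ) (hz : |z| < 1) :
    z * hyperg 1 (3/2) 2 z = 2 * (1 / √(1 - z) - 1) := by
  have h := sub_one_mul_mul_hyperg_one_two (3/2) z hz
  rw [show (3/2 : ℝ) - 1 = 1/2 by norm_num, ← Real.sqrt_eq_rpow] at h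
  linarith

lemma sqrt_one_sub_mul_div_eq {t : ℝ} (ht : -3 < t) (ht3 : t ≤ 3) :
    √(1 - t * (1 - t/9) / (1 + t/3)) = (3 - t) / √(9 + 3 * t) := by
  have h1z : 1 - t * (1 - t/9) / (1 + t/3) = ((3 - t) / √(9 + 3 * t)) ^ 2 := by
    have h3 : 3 + t ≠ 0 := by linarith
    have h9 : 9 + 3 * t ≠ 0 := by linarith
    rw [div_pow, Real.sq_sqrt (by linarith), eq_div_iff h9]
    field_simp
    ring
  rw [h1z, Real.sqrt_sq (div_nonneg (by linarith) (Real.sqrt_nonneg _))]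

theorem hyperg_inequality_reversed_dim3 (t : Real) (ht : t ∈ Set.Ioc (0:Real) 1) :
    hyperg 1 (3/2) 2 (t * (1 - t/9) / (1 + t/3))
      < (1 + t/3) / ((1 - t/3) * (1 - t/9)) := by
  obtain ⟨ht0, ht1⟩ := ht
  set z := t * (1 - t/9) / (1 + t/3) with hz
  have h3 : 3 - t ≠ 0 := by linarith
  have hz0 : 0 < z := div_pos (mul_pos ht0 (by linarith)) (by linarith)
  have hz1 : z < 1 := by
    rw [hz, div_lt_one (by linarith)]
    nlinarith
  have hrhs : z * ((1 + t/3) / ((1 - t/3) * (1 - t/9))) = 3 * t / (3 - t) := by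
    have h9 : 9 - t ≠ 0 := by linarith
    rw [hz]
    field_simp
  have hamgm : √(9 + 3 * t) < (6 + t) / 2 := by
    rw [Real.sqrt_lt' (by linarith)]
    nlinarith [sq_pos_of_pos ht0]
  refine lt_of_mul_lt_mul_left (a := z) ?_ hz0.le
  rw [mul_hyperg_one_three_halves_two z (abs_lt.2 ⟨by linarith, hz1⟩), hrhs,
    sqrt_one_sub_mul_div_eq (by linarith) (by linarith), one_div_div,
    div_sub_one h3, mul_div_assoc', div_lt_div_iff_of_pos_right (by linarith)]
  linarith
end
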